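/- arXiv:2505.09464 — 5 statements merged into one kernel-verified Lean document; each statement's English description precedes it below -/
import Mathlib

section
/- If μ is a probability measure on F_q^d with support E, then sup over nonzero ξ of |μ̂(ξ)| is at least sqrt((q^d |E|^{-1} − 1)/(q^d − 1)). -/
open Finset BigOperators Matrix

noncomputable def ft {F : Type*} [CommRing F] [Fintype F] {d : ℕ}
    (χ : AddChar F ℂ) (f : (Fin d → F) → ℂ) (ξ : Fin d → F) : ℂ :=
  ∑ x, χ (-(ξ ⬝ᵥ x)) * f x

/-!
Plancherel gives `q^d ∑ μ(x)² = ∑_ξ |μ̂(ξ)|² = 1 + ∑_{ξ ≠ 0} |μ̂(ξ)|²`, since `μ̂(0) = ∑ μ = 1`.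
Cauchy–Schwarz on the support bounds the left side below by `q^d / |E|`, and the right side
is at most `1 + (q^d - 1) M²` with `M = sup_{ξ ≠ 0} |μ̂(ξ)|`.
-/

lemma ft_zero {F : Type*} [CommRing F] [Fintype F] {d : ℕ} (χ : AddChar F ℂ)
    (f : (Fin d → F) → ℂ) : ft χ f 0 = ∑ x, f x := by
  simp [ft]

section FourierAnalysis

variable {F : Type*} [Field F] [Fintype F] {d : ℕ} {χ : AddChar F ℂ}

lemma sum_addChar_dotProduct_eq_zero (hχ : χ ≠ 1) {v : Fin d → F} (hv : v ≠ 0) :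
    ∑ ξ : Fin d → F, χ (ξ ⬝ᵥ v) = 0 := by
  let ψ : AddChar (Fin d → F) ℂ :=
    χ.compAddMonoidHom (AddMonoidHom.mk' (· ⬝ᵥ v) fun a b => add_dotProduct a b v)
  change ∑ ξ, ψ ξ = 0
  refine AddChar.sum_eq_zero_iff_ne_zero.2 (AddChar.ne_one_iff.2 ?_)
  obtain ⟨a, ha⟩ := AddChar.ne_one_iff.1 hχ
  obtain ⟨i, hi⟩ := Function.ne_iff.1 hv
  refine ⟨Pi.single i (a / v i), ?_⟩
  simpa [ψ, single_dotProduct, div_mul_cancel₀ _ hi] using ha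

lemma sum_norm_sq_ft (hχ : χ ≠ 1) (f : (Fin d → F) → ℂ) :
    ∑ ξ, ‖ft χ f ξ‖ ^ 2 = (Fintype.card F : ℝ) ^ d * ∑ x, ‖f x‖ ^ 2 := by
  classical
  have hconj (a : F) : starRingEnd ℂ (χ a) = χ (-a) := by
    rw [AddChar.starComp_apply (Nat.pos_of_ne_zero (CharP.ringChar_ne_zero_of_finite F)),
      AddChar.inv_apply]
  have horth (x y : Fin d → F) :
      ∑ ξ : Fin d → F, χ (ξ ⬝ᵥ (y - x)) = if x = y then (Fintype.card F : ℂ) ^ d else 0 := by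
    split_ifs with h
    · simp [h]
    · exact sum_addChar_dotProduct_eq_zero hχ (sub_ne_zero.2 (Ne.symm h))
  apply Complex.ofReal_injective
  push_cast
  simp_rw [← Complex.mul_conj']
  calc ∑ ξ, ft χ f ξ * starRingEnd ℂ (ft χ f ξ)
      = ∑ ξ, ∑ x, ∑ y, f x * starRingEnd ℂ (f y) * χ (ξ ⬝ᵥ (y - x)) := by
        refine sum_congr rfl fun ξ _ => ?_
        simp only [ft, map_sum, map_mul, hconj, neg_neg, sum_mul_sum]
        refine sum_congr rfl fun x _ => sum_congr rfl fun y _ => ?_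
        rw [dotProduct_sub, sub_eq_add_neg, AddChar.map_add_eq_mul]
        ring
    _ = ∑ x, ∑ y, f x * starRingEnd ℂ (f y) * ∑ ξ : Fin d → F, χ (ξ ⬝ᵥ (y - x)) := by
        simp_rw [mul_sum]
        rw [sum_comm]
        exact sum_congr rfl fun x _ => sum_comm
    _ = (Fintype.card F : ℂ) ^ d * ∑ x, f x * starRingEnd ℂ (f x) := by
        simp only [horth, mul_ite, mul_zero, sum_ite_eq, mem_univ, if_true, mul_sum]
        exact sum_congr rfl fun x _ => mul_comm _ _

end FourierAnalysis

lemma inv_card_le_sum_sq {α : Type*} [Fintype α] {μ : α → ℝ} (hμ1 : ∑ x, μ x = 1)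
    {E : Finset α} (hE : ∀ x ∉ E, μ x ≤ 0) : (#E : ℝ)⁻¹ ≤ ∑ x, μ x ^ 2 := by
  have hmass : 1 ≤ ∑ x ∈ E, μ x :=
    hμ1 ▸ sum_le_sum_of_subset_of_nonpos' (subset_univ E) fun x _ hx => hE x hx
  have hCS : 1 ≤ #E * ∑ x, μ x ^ 2 := calc
    1 ≤ (∑ x ∈ E, μ x) ^ 2 := one_le_pow₀ hmass
    _ ≤ #E * ∑ x ∈ E, μ x ^ 2 := sq_sum_le_card_mul_sum_sq
    _ ≤ #E * ∑ x, μ x ^ 2 := by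
        gcongr
        exact subset_univ E
  have hE_pos : (0 : ℝ) < #E :=
    Nat.cast_pos.2 (card_pos.2 (nonempty_of_sum_ne_zero (by linarith : ∑ x ∈ E, μ x ≠ 0)))
  exact (inv_le_iff_one_le_mul₀' hE_pos).2 hCS

lemma sum_sq_le_card_mul_iSup_sq {ι : Type*} [Fintype ι] {g : ι → ℝ} (hg : ∀ i, 0 ≤ g i) :
    ∑ i, g i ^ 2 ≤ Fintype.card ι * (⨆ i, g i) ^ 2 := by
  have hle (i : ι) : g i ^ 2 ≤ (⨆ i, g i) ^ 2 :=
    pow_le_pow_left₀ (hg i) (le_ciSup (Set.finite_range g).bddAbove i) 2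
  simpa using sum_le_card_nsmul univ _ _ fun i _ => hle i

theorem stmt_4_general {F : Type*} [Field F] [Fintype F] {d q : ℕ}
    (hq : Fintype.card F = q) (χ : AddChar F ℂ) (hχ : χ ≠ 1)
    (μ : (Fin d → F) → ℝ) (hμ1 : ∑ x, μ x = 1)
    (E : Finset (Fin d → F)) (hE : ∀ x, x ∈ E ↔ 0 < μ x) :
    Real.sqrt (((q : ℝ) ^ d * (E.card : ℝ)⁻¹ - 1) / ((q : ℝ) ^ d - 1)) ≤
      ⨆ ξ : {ξ : Fin d → F // ξ ≠ 0}, ‖ft χ (fun x => (μ x : ℂ)) ξ.1‖ := by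
  classical
  set μhat := ft χ fun x => (μ x : ℂ) with hμhat
  set M := ⨆ ξ : {ξ : Fin d → F // ξ ≠ 0}, ‖μhat ξ.1‖
  have hcard : (Fintype.card {ξ : Fin d → F // ξ ≠ 0} : ℝ) = q ^ d - 1 := by
    rw [Fintype.card_subtype_compl, Fintype.card_subtype_eq, Fintype.card_fun, Fintype.card_fin,
      hq, Nat.cast_sub (Nat.one_le_pow _ _ (hq ▸ Fintype.card_pos)), Nat.cast_pow, Nat.cast_one]
  have hplancherel :
      (q : ℝ) ^ d * ∑ x, μ x ^ 2 = 1 + ∑ ξ : {ξ : Fin d → F // ξ ≠ 0}, ‖μhat ξ‖ ^ 2 := by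
    have hzero : ‖μhat 0‖ ^ 2 = 1 := by
      rw [hμhat, ft_zero, ← Complex.ofReal_sum, hμ1, Complex.ofReal_one, norm_one, one_pow]
    rw [← hzero, ← Fintype.sum_eq_add_sum_subtype_ne (fun ξ => ‖μhat ξ‖ ^ 2),
      sum_norm_sq_ft hχ, hq]
    simp
  have hL2 := inv_card_le_sum_sq hμ1 fun x hx => not_lt.1 (mt (hE x).2 hx)
  have hkey : (q : ℝ) ^ d * (#E : ℝ)⁻¹ - 1 ≤ M ^ 2 * ((q : ℝ) ^ d - 1) := calc
    _ ≤ (q : ℝ) ^ d * ∑ x, μ x ^ 2 - 1 := by gcongr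
    _ = ∑ ξ : {ξ : Fin d → F // ξ ≠ 0}, ‖μhat ξ‖ ^ 2 := by rw [hplancherel, add_sub_cancel_left]
    _ ≤ Fintype.card {ξ : Fin d → F // ξ ≠ 0} * M ^ 2 :=
        sum_sq_le_card_mul_iSup_sq fun ξ => norm_nonneg _
    _ = M ^ 2 * ((q : ℝ) ^ d - 1) := by rw [hcard, mul_comm]
  have hM : 0 ≤ M := Real.iSup_nonneg fun ξ => norm_nonneg _
  exact Real.sqrt_le_iff.2 ⟨hM, div_le_of_le_mul₀ (hcard ▸ Nat.cast_nonneg _) (sq_nonneg M) hkey⟩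

/-- If `μ` is a probability measure on `F_q^d` with support `E`, then
`sup_{ξ ≠ 0} |μ̂(ξ)| ≥ sqrt((q^d |E|⁻¹ − 1)/(q^d − 1))`. -/
theorem stmt_4 {F : Type*} [Field F] [Fintype F] [DecidableEq F] {d q : ℕ}
    (hq : Fintype.card F = q) (hq2 : 2 ≤ q) (χ : AddChar F ℂ) (hχ : χ ≠ 1)
    (μ : (Fin d → F) → ℝ) (hμ0 : ∀ x, 0 ≤ μ x) (hμ1 : ∑ x, μ x = 1)
    (E : Finset (Fin d → F)) (hE : ∀ x, x ∈ E ↔ 0 < μ x) :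
    Real.sqrt (((q : ℝ) ^ d * (E.card : ℝ)⁻¹ - 1) / ((q : ℝ) ^ d - 1)) ≤
      ⨆ ξ : {ξ : Fin d → F // ξ ≠ 0}, ‖ft χ (fun x => (μ x : ℂ)) ξ.1‖ :=
  stmt_4_general hq χ hχ μ hμ1 E hE
end

section
/- Let d > k ≥ 1 and let K ⊆ F_q^d be a (d,k)-set, i.e., for every k-dimensional subspace V of F_q^d there exists u ∈ F_q^d with u + V ⊆ K. Then there exists a probability measure μ supported on K with |μ̂(ξ)| ≤ q^{-k} for all nonzero ξ. -/
open Finset BigOperators Matrix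

/-!
Split `F^d = F^k × F^m`. For every `A : Matrix (Fin m) (Fin k) F` the graph `{(t, A t)}` is a
`k`-dimensional subspace, so `K` contains a translate `u A + graph A`. Take `μ` to be the law of
`u A + (t, A t)` for `A` and `t` uniform. Its Fourier coefficient at `ξ = (ξ₁, ξ₂)` is the average
over `A` of a unimodular factor times the indicator that `ξ` annihilates `graph A`, i.e. that
`ξ₁ + ξ₂ ᵥ* A = 0`. For `ξ ≠ 0` this affine condition on `A` cuts out at most a `q⁻ᵏ` fraction
of all matrices: it is empty if `ξ₂ = 0`, and a fibre of the surjection `A ↦ ξ₂ ᵥ* A` otherwise.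
-/

lemma card_fiber_mul_card_eq_of_surjective {G H : Type*} [AddGroup G] [Fintype G] [AddGroup H]
    [Fintype H] [DecidableEq H] (f : G →+ H) (hf : Function.Surjective f) (y : H) :
    #{g | f g = y} * Fintype.card H = Fintype.card G := by
  calc #{g | f g = y} * Fintype.card H = ∑ z : H, #{g | f g = z} := by
        rw [sum_congr rfl fun z _ => AddMonoidHom.card_fiber_eq_of_mem_range f (hf z) (hf y),
          sum_const, card_univ, smul_eq_mul, mul_comm]
    _ = Fintype.card G := (card_eq_sum_card_fiberwise fun _ _ => mem_univ _).symm

section UniformPushforward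

variable {Ω E : Type*} [Fintype Ω] [DecidableEq E]

noncomputable def uniformPushforward (f : Ω → E) (x : E) : ℝ :=
  #{ω | f ω = x} / Fintype.card Ω

variable (f : Ω → E)

lemma uniformPushforward_nonneg (x : E) : 0 ≤ uniformPushforward f x := by
  unfold uniformPushforward; positivity

lemma sum_uniformPushforward [Fintype E] [Nonempty Ω] : ∑ x, uniformPushforward f x = 1 := by
  simp only [uniformPushforward]
  rw [← sum_div, ← Nat.cast_sum,
    ← card_eq_sum_card_fiberwise fun _ _ => mem_univ _, card_univ, div_self]
  exact_mod_cast Fintype.card_ne_zero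

lemma mem_range_of_uniformPushforward_ne_zero {x : E} (hx : uniformPushforward f x ≠ 0) :
    x ∈ Set.range f := by
  obtain ⟨ω, hω⟩ : (univ.filter fun ω => f ω = x).Nonempty := by
    contrapose! hx
    simp [uniformPushforward, hx]
  exact ⟨ω, (mem_filter.mp hω).2⟩

end UniformPushforward

lemma ft_uniformPushforward {Ω F : Type*} [Fintype Ω] [CommRing F] [Fintype F] [DecidableEq F]
    {d : ℕ} (χ : AddChar F ℂ) (f : Ω → Fin d → F) (ξ : Fin d → F) :
    ft χ (fun x => (uniformPushforward f x : ℂ)) ξ =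
      (Fintype.card Ω : ℂ)⁻¹ * ∑ ω, χ (-(ξ ⬝ᵥ f ω)) := by
  rw [ft, ← sum_fiberwise' univ f fun x => χ (-(ξ ⬝ᵥ x)), mul_sum]
  refine sum_congr rfl fun x _ => ?_
  simp [uniformPushforward, div_eq_inv_mul, mul_comm, mul_left_comm]

section CharacterSums

variable {F ι : Type*} [Field F] [Fintype F] [DecidableEq F] [Fintype ι] [DecidableEq ι]
  {χ : AddChar F ℂ}

lemma sum_addChar_dotProduct (hχ : χ ≠ 1) (w : ι → F) :
    ∑ t, χ (w ⬝ᵥ t) = if w = 0 then (Fintype.card (ι → F) : ℂ) else 0 := by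
  let ψ : AddChar (ι → F) ℂ := χ.compAddMonoidHom (AddMonoidHom.mk' (w ⬝ᵥ ·) (dotProduct_add w))
  -- `χ ≠ 1` makes `χ` primitive: `s ↦ χ (a * s)` is trivial only for `a = 0`.
  have hψ : ψ = 0 ↔ w = 0 := by
    refine ⟨fun h => funext fun i => by_contra fun hi => AddChar.IsPrimitive.of_ne_one hχ hi ?_, ?_⟩
    · ext s; simpa [ψ, dotProduct_single] using DFunLike.congr_fun h (Pi.single i s)
    · rintro rfl; ext; simp [ψ]
  rw [show ∑ t, χ (w ⬝ᵥ t) = ∑ t, ψ t from rfl, ψ.sum_eq_ite]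
  exact if_congr hψ rfl rfl

lemma norm_sum_addChar_affine (hχ : χ ≠ 1) {d : ℕ} (ξ u : Fin d → F) (M : Matrix (Fin d) ι F) :
    ‖∑ t, χ (-(ξ ⬝ᵥ (u + M *ᵥ t)))‖ = if ξ ᵥ* M = 0 then (Fintype.card (ι → F) : ℝ) else 0 := by
  have h : ∀ t, χ (-(ξ ⬝ᵥ (u + M *ᵥ t))) = χ (-(ξ ⬝ᵥ u)) * χ (-(ξ ᵥ* M) ⬝ᵥ t) := fun t => by
    rw [dotProduct_add, dotProduct_mulVec, neg_add, neg_dotProduct, AddChar.map_add_eq_mul]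
  simp_rw [h, ← mul_sum, sum_addChar_dotProduct hχ, neg_eq_zero, norm_mul, AddChar.norm_apply,
    one_mul]
  split_ifs <;> simp

lemma norm_ft_uniformPushforward_affine_le {I : Type*} [Fintype I] (hχ : χ ≠ 1) {d : ℕ}
    (u : I → Fin d → F) (M : I → Matrix (Fin d) ι F) (ξ : Fin d → F) :
    ‖ft χ (fun x => (uniformPushforward (fun p : I × (ι → F) => u p.1 + M p.1 *ᵥ p.2) x : ℂ)) ξ‖
      ≤ #{i | ξ ᵥ* M i = 0} / Fintype.card I := by
  rw [ft_uniformPushforward, norm_mul, Fintype.sum_prod_type, Fintype.card_prod]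
  calc _ ≤ ‖((Fintype.card I * Fintype.card (ι → F) : ℕ) : ℂ)⁻¹‖ *
        ∑ i, ‖∑ t, χ (-(ξ ⬝ᵥ (u i + M i *ᵥ t)))‖ := by gcongr; exact norm_sum_le _ _
    _ = _ := by
      simp_rw [norm_sum_addChar_affine hχ, sum_ite, sum_const_zero, add_zero, sum_const,
        nsmul_eq_mul]
      have : (Fintype.card (ι → F) : ℝ) ≠ 0 := by positivity
      push_cast
      rw [norm_inv, Complex.norm_mul, Complex.norm_natCast, Complex.norm_natCast]
      field_simp

end CharacterSums

section GraphMatrix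

variable {R ι κ n : Type*} [Fintype ι] [DecidableEq ι]

def graphMatrix [Semiring R] (e : ι ⊕ κ ≃ n) (A : Matrix κ ι R) : Matrix n ι R :=
  (fromRows 1 A).submatrix e.symm id

lemma mulVec_graphMatrix_injective [Semiring R] (e : ι ⊕ κ ≃ n) (A : Matrix κ ι R) :
    Function.Injective (graphMatrix e A *ᵥ ·) := fun t s h => funext fun i => by
  have h' : (fromRows 1 A *ᵥ t) (Sum.inl i) = (fromRows 1 A *ᵥ s) (Sum.inl i) := by
    simpa [graphMatrix, mulVec] using congrFun h (e (Sum.inl i))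
  simpa using h'

lemma finrank_range_mulVecLin_graphMatrix {F : Type*} [Field F] (e : ι ⊕ κ ≃ n)
    (A : Matrix κ ι F) :
    Module.finrank F (LinearMap.range (graphMatrix e A).mulVecLin) = Fintype.card ι := by
  rw [LinearMap.finrank_range_of_inj (mulVec_graphMatrix_injective e A),
    Module.finrank_fintype_fun_eq_card]

variable [Fintype κ] [Fintype n]

lemma vecMul_graphMatrix [Semiring R] (e : ι ⊕ κ ≃ n) (A : Matrix κ ι R) (ξ : n → R) :
    ξ ᵥ* graphMatrix e A = ξ ∘ e ∘ Sum.inl + (ξ ∘ e ∘ Sum.inr) ᵥ* A := by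
  rw [graphMatrix, submatrix_vecMul_equiv, Equiv.symm_symm, Function.comp_id, vecMul_fromRows,
    vecMul_one]
  rfl

variable {F : Type*} [Field F] [Fintype F] [DecidableEq F] [DecidableEq κ]

lemma card_add_vecMul_eq_zero_mul_le {w : ι → F} {v : κ → F} (h : w ≠ 0 ∨ v ≠ 0) :
    #{A : Matrix κ ι F | w + v ᵥ* A = 0} * Fintype.card (ι → F) ≤
      Fintype.card (Matrix κ ι F) := by
  obtain rfl | hv := eq_or_ne v 0
  · simp [h.resolve_right (not_not.mpr rfl)]
  obtain ⟨j, hj⟩ := Function.ne_iff.mp hv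
  let f : Matrix κ ι F →+ (ι → F) := AddMonoidHom.mk' (v ᵥ* ·) fun A B => vecMul_add A B v
  have hf : Function.Surjective f := fun y =>
    ⟨vecMulVec (Pi.single j (v j)⁻¹) y,
      by simp [f, vecMul_vecMulVec, dotProduct_single, mul_inv_cancel₀ hj]⟩
  simp_rw [add_eq_zero_iff_eq_neg']
  exact (card_fiber_mul_card_eq_of_surjective f hf (-w)).le

lemma card_vecMul_graphMatrix_eq_zero_mul_le (e : ι ⊕ κ ≃ n) {ξ : n → F} (hξ : ξ ≠ 0) :
    #{A : Matrix κ ι F | ξ ᵥ* graphMatrix e A = 0} * Fintype.card (ι → F) ≤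
      Fintype.card (Matrix κ ι F) := by
  simp_rw [vecMul_graphMatrix]
  refine card_add_vecMul_eq_zero_mul_le (not_and_or.mp fun h => hξ (funext fun x => ?_))
  obtain ⟨i | j, rfl⟩ := e.surjective x
  exacts [congrFun h.1 i, congrFun h.2 j]

end GraphMatrix

theorem stmt_12_general {F : Type*} [Field F] [Fintype F] {d k q : ℕ}
    (hq : Fintype.card F = q) (χ : AddChar F ℂ) (hχ : χ ≠ 1)
    (hdk : k < d)
    (K : Set (Fin d → F))
    (hK : ∀ V : Submodule F (Fin d → F), Module.finrank F V = k →
      ∃ u : Fin d → F, ∀ v ∈ V, u + v ∈ K) :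
    ∃ μ : (Fin d → F) → ℝ, (∀ x, 0 ≤ μ x) ∧ (∑ x, μ x = 1) ∧
      (∀ x, μ x ≠ 0 → x ∈ K) ∧
      ∀ ξ : Fin d → F, ξ ≠ 0 →
        ‖ft χ (fun x => (μ x : ℂ)) ξ‖ ≤ ((q : ℝ) ^ k)⁻¹ := by
  classical
  subst hq
  obtain ⟨m, rfl⟩ := Nat.exists_eq_add_of_le hdk.le
  let G := graphMatrix (R := F) (finSumFinEquiv : Fin k ⊕ Fin m ≃ _)
  obtain ⟨u, hu⟩ : ∃ u : Matrix (Fin m) (Fin k) F → Fin (k + m) → F,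
      ∀ A t, u A + G A *ᵥ t ∈ K := by
    choose u hu using fun A =>
      hK _ (by simpa using finrank_range_mulVecLin_graphMatrix finSumFinEquiv A)
    exact ⟨u, fun A t => hu A _ ⟨t, rfl⟩⟩
  refine ⟨uniformPushforward fun p : _ × (Fin k → F) => u p.1 + G p.1 *ᵥ p.2,
    uniformPushforward_nonneg _, sum_uniformPushforward _, fun x hx => ?_, fun ξ hξ => ?_⟩
  · obtain ⟨⟨A, t⟩, rfl⟩ := mem_range_of_uniformPushforward_ne_zero _ hx
    exact hu A t
  have hcount := card_vecMul_graphMatrix_eq_zero_mul_le finSumFinEquiv hξ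
  rw [Fintype.card_fun, Fintype.card_fin] at hcount
  refine (norm_ft_uniformPushforward_affine_le hχ u G ξ).trans ?_
  rw [div_le_iff₀ (mod_cast Fintype.card_pos), ← div_eq_inv_mul, le_div_iff₀ (by positivity)]
  exact_mod_cast hcount

/-- A `(d,k)`-set `K ⊆ F_q^d` supports a probability measure `μ` with `|μ̂(ξ)| ≤ q^{-k}` for
all nonzero `ξ`. -/
theorem stmt_12 {F : Type*} [Field F] [Fintype F] {d k q : ℕ}
    (hq : Fintype.card F = q) (χ : AddChar F ℂ) (hχ : χ ≠ 1)
    (hk : 1 ≤ k) (hdk : k < d)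
    (K : Set (Fin d → F))
    (hK : ∀ V : Submodule F (Fin d → F), Module.finrank F V = k →
      ∃ u : Fin d → F, ∀ v ∈ V, u + v ∈ K) :
    ∃ μ : (Fin d → F) → ℝ, (∀ x, 0 ≤ μ x) ∧ (∑ x, μ x = 1) ∧
      (∀ x, μ x ≠ 0 → x ∈ K) ∧
      ∀ ξ : Fin d → F, ξ ≠ 0 →
        ‖ft χ (fun x => (μ x : ℂ)) ξ‖ ≤ ((q : ℝ) ^ k)⁻¹ :=
  stmt_12_general hq χ hχ hdk K hK
end

section
/- Let d ≥ 2 and K ⊆ F_q^d be a Kakeya set (for every direction x ∈ F_q^d \ {0} there is y with the line {y + a·x : a ∈ F_q} contained in K). Then there exists a probability measure μ supported on K with |μ̂(ξ)| ≤ q^{-1} for all nonzero ξ ∈ F_q^d. -/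
/-!
Choose for every direction `x ≠ 0` a line `{y x + a • x}` inside `K`, and let `μ` be the image of
the uniform probability on the `(q ^ d - 1) * q` pairs `(x, a)` under `(x, a) ↦ y x + a • x`.
For `ξ ≠ 0` the inner sum `∑ a, χ (-ξ ⬝ᵥ (y x + a • x))` vanishes unless `ξ ⬝ᵥ x = 0`, when it has
modulus `q`. Only `q ^ (d - 1) - 1` directions are orthogonal to `ξ`, so
`‖μ̂ ξ‖ ≤ (q ^ d - q) / ((q ^ d - 1) * q) ≤ q⁻¹`.
-/

open Finset BigOperators Matrix

section Lines

variable {F ι R : Type*} [Field F] [Fintype F] [DecidableEq F] [Fintype ι]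

theorem sum_addChar_dotProduct_line [CommRing R] [IsDomain R] {χ : AddChar F R} (hχ : χ ≠ 1)
    (ξ y x : ι → F) :
    ∑ a : F, χ (-(ξ ⬝ᵥ (y + a • x))) =
      χ (-(ξ ⬝ᵥ y)) * if ξ ⬝ᵥ x = 0 then (Fintype.card F : R) else 0 := by
  have h := AddChar.sum_mulShift (-(ξ ⬝ᵥ x)) (AddChar.IsPrimitive.of_ne_one hχ)
  simp only [neg_eq_zero, Nat.cast_ite, Nat.cast_zero] at h
  rw [← h, Finset.mul_sum]
  refine Finset.sum_congr rfl fun a _ => ?_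
  rw [← AddChar.map_add_eq_mul, dotProduct_add, dotProduct_smul, smul_eq_mul]
  congr 1
  ring

theorem card_ker_dotProduct_mul_card {ξ : ι → F} (hξ : ξ ≠ 0) :
    Nat.card {x : ι → F // ξ ⬝ᵥ x = 0} * Fintype.card F = Fintype.card F ^ Fintype.card ι := by
  classical
  let f : (ι → F) →+ F := AddMonoidHom.mk' (ξ ⬝ᵥ ·) (dotProduct_add ξ)
  have hf : Function.Surjective f := by
    obtain ⟨i, hi⟩ := Function.ne_iff.mp hξ
    intro t
    refine ⟨Pi.single i (t / ξ i), ?_⟩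
    simp [f, dotProduct_single, mul_div_cancel₀ _ hi]
  have := f.ker.card_mul_index
  rw [AddSubgroup.index_ker, f.range_eq_top.mpr hf, AddSubgroup.card_top] at this
  simpa [f, Nat.card_eq_fintype_card] using this

theorem norm_sum_addChar_lines_le [DecidableEq ι] {χ : AddChar F ℂ} (hχ : χ ≠ 1) {ξ : ι → F} (hξ : ξ ≠ 0)
    (Y : {x : ι → F // x ≠ 0} → ι → F) :
    ‖∑ p : {x : ι → F // x ≠ 0} × F, χ (-(ξ ⬝ᵥ (Y p.1 + p.2 • (p.1 : ι → F))))‖ ≤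
      (Fintype.card F : ℝ) ^ Fintype.card ι - Fintype.card F := by
  have hlines : ∀ x : {x : ι → F // x ≠ 0}, ‖∑ a : F, χ (-(ξ ⬝ᵥ (Y x + a • (x : ι → F))))‖ =
      if ξ ⬝ᵥ (x : ι → F) = 0 then (Fintype.card F : ℝ) else 0 := by
    intro x
    rw [sum_addChar_dotProduct_line hχ, norm_mul, AddChar.norm_apply, one_mul]
    split_ifs <;> simp
  have hker : ∑ x : ι → F, (if ξ ⬝ᵥ x = 0 then (Fintype.card F : ℝ) else 0) =
      (Fintype.card F : ℝ) ^ Fintype.card ι := by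
    rw [Finset.sum_ite, Finset.sum_const_zero, add_zero, Finset.sum_const, nsmul_eq_mul,
      ← Fintype.card_subtype, ← Nat.card_eq_fintype_card]
    exact_mod_cast card_ker_dotProduct_mul_card hξ
  calc _ ≤ ∑ x : {x : ι → F // x ≠ 0}, ‖∑ a : F, χ (-(ξ ⬝ᵥ (Y x + a • (x : ι → F))))‖ := by
        rw [Fintype.sum_prod_type]
        exact norm_sum_le _ _
    _ = ∑ x ∈ univ.erase 0, (if ξ ⬝ᵥ x = 0 then (Fintype.card F : ℝ) else 0) := by
        simp_rw [hlines]
        exact (Finset.sum_subtype (univ.erase 0) (p := (· ≠ 0)) (by simp)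
          fun x => if ξ ⬝ᵥ x = 0 then (Fintype.card F : ℝ) else 0).symm
    _ = (Fintype.card F : ℝ) ^ Fintype.card ι - Fintype.card F := by
        rw [Finset.sum_erase_eq_sub (mem_univ _), hker, dotProduct_zero, if_pos rfl]

end Lines

section Pushforward

variable {α β : Type*} [Fintype α] [DecidableEq β]

noncomputable def pushforward (g : α → β) (w : α → ℝ) (b : β) : ℝ :=
  ∑ a with g a = b, w a

theorem pushforward_nonneg {g : α → β} {w : α → ℝ} (hw : ∀ a, 0 ≤ w a) (b : β) :
    0 ≤ pushforward g w b :=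
  Finset.sum_nonneg fun a _ => hw a

theorem sum_pushforward [Fintype β] (g : α → β) (w : α → ℝ) :
    ∑ b, pushforward g w b = ∑ a, w a :=
  Finset.sum_fiberwise univ g w

theorem exists_eq_of_pushforward_ne_zero {g : α → β} {w : α → ℝ} {b : β}
    (h : pushforward g w b ≠ 0) : ∃ a, g a = b := by
  obtain ⟨a, ha, -⟩ := Finset.exists_ne_zero_of_sum_ne_zero h
  exact ⟨a, (Finset.mem_filter.mp ha).2⟩

theorem ft_pushforward {F : Type*} [CommRing F] [Fintype F] {d : ℕ} [DecidableEq (Fin d → F)]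
    (χ : AddChar F ℂ) (g : α → Fin d → F) (w : α → ℝ) (ξ : Fin d → F) :
    ft χ (fun z => (pushforward g w z : ℂ)) ξ = ∑ a, χ (-(ξ ⬝ᵥ g a)) * w a := by
  unfold ft pushforward
  push_cast
  simp_rw [Finset.mul_sum]
  rw [← Finset.sum_fiberwise univ g]
  exact Finset.sum_congr rfl fun z _ => Finset.sum_congr rfl fun a ha => by
    rw [(Finset.mem_filter.mp ha).2]

end Pushforward

/-- A Kakeya set `K ⊆ F_q^d`, `d ≥ 2`, supports a probability measure `μ` with
`|μ̂(ξ)| ≤ q^{-1}` for all nonzero `ξ`. -/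
theorem stmt_13 {F : Type*} [Field F] [Fintype F] {d q : ℕ}
    (hq : Fintype.card F = q) (χ : AddChar F ℂ) (hχ : χ ≠ 1) (hd : 2 ≤ d)
    (K : Set (Fin d → F))
    (hK : ∀ x : Fin d → F, x ≠ 0 → ∃ y : Fin d → F, ∀ a : F, y + a • x ∈ K) :
    ∃ μ : (Fin d → F) → ℝ, (∀ x, 0 ≤ μ x) ∧ (∑ x, μ x = 1) ∧
      (∀ x, μ x ≠ 0 → x ∈ K) ∧
      ∀ ξ : Fin d → F, ξ ≠ 0 →
        ‖ft χ (fun x => (μ x : ℂ)) ξ‖ ≤ (q : ℝ)⁻¹ := by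
  classical
  choose Y hY using fun x : {x : Fin d → F // x ≠ 0} => hK x x.2
  have hq1 : 1 < q := hq ▸ Fintype.one_lt_card
  have hq1' : (1 : ℝ) < q := mod_cast hq1
  set N : ℝ := (Fintype.card ({x : Fin d → F // x ≠ 0} × F) : ℝ) with hN_def
  have hN : N = (q ^ d - 1) * q := by
    simp [N, hq, Nat.cast_sub (Nat.one_le_pow d q (by omega))]
  have hqd : (q : ℝ) < q ^ d := lt_self_pow₀ hq1' (by omega)
  have hN0 : 0 < N := hN ▸ mul_pos (by linarith) (by linarith)
  refine ⟨pushforward (fun p : {x : Fin d → F // x ≠ 0} × F => Y p.1 + p.2 • p.1.1)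
    fun _ => N⁻¹, pushforward_nonneg fun _ => by positivity, ?_, ?_, ?_⟩
  · rw [sum_pushforward, Finset.sum_const, nsmul_eq_mul, Finset.card_univ, ← hN_def]
    exact mul_inv_cancel₀ hN0.ne'
  · intro z hz
    obtain ⟨p, rfl⟩ := exists_eq_of_pushforward_ne_zero hz
    exact hY p.1 p.2
  · intro ξ hξ
    rw [ft_pushforward, ← Finset.sum_mul, norm_mul, Complex.norm_real,
      Real.norm_of_nonneg (by positivity), mul_inv_le_iff₀ hN0, hN, mul_comm,
      mul_inv_cancel_right₀ (by positivity)]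
    have hlines := norm_sum_addChar_lines_le hχ hξ Y
    simp only [hq, Fintype.card_fin] at hlines
    linarith
end

section
/- Every Kakeya set K ⊆ F_q^2 satisfies |K| ≥ q² / (2 − q^{-2}); in particular |K| ≥ q²/2. -/
/-!
For each of the `q + 1` directions of `F²` (the points of the projective line) the Kakeya set
contains a full line of `q` points, and two lines with different directions meet in at most one
point. By the second Bonferroni inequality these `q + 1` lines cover at least
`q (q + 1) - (q + 1).choose 2 = q (q + 1) / 2` points, and `q (q + 1) / 2 ≥ q² / (2 - q⁻²)`.
-/

open Finset

theorem Finset.sum_card_le_card_biUnion_add_choose_two {ι α : Type*} [DecidableEq ι]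
    [DecidableEq α] (s : Finset ι) (f : ι → Finset α)
    (h : (s : Set ι).Pairwise fun i j => #(f i ∩ f j) ≤ 1) :
    ∑ i ∈ s, #(f i) ≤ #(s.biUnion f) + (#s).choose 2 := by
  induction s using Finset.induction_on with
  | empty => simp
  | insert a t ha ih =>
    rw [coe_insert, Set.pairwise_insert] at h
    have hnew : #(f a ∩ t.biUnion f) ≤ #t :=
      calc #(f a ∩ t.biUnion f) = #(t.biUnion fun i => f a ∩ f i) := by
            rw [inter_biUnion]
        _ ≤ ∑ i ∈ t, #(f a ∩ f i) := card_biUnion_le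
        _ ≤ ∑ _i ∈ t, 1 :=
            sum_le_sum fun i hi => (h.2 i hi (by rintro rfl; exact ha hi)).1
        _ = #t := by simp
    have hunion := card_union_add_card_inter (f a) (t.biUnion f)
    have hchoose : (#t + 1).choose 2 = (#t).choose 2 + #t := by
      simp [Nat.choose_succ_succ, Nat.add_comm]
    have := ih h.1
    rw [sum_insert ha, biUnion_insert, card_insert_of_notMem ha]
    omega

section Line

variable (R : Type*) {M : Type*} [Ring R] [Fintype R] [AddCommGroup M] [Module R M]
  [DecidableEq M]

def affineLineFinset (y x : M) : Finset M :=
  univ.image fun a : R => y + a • x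

variable {R}

theorem affineLineFinset_subset_iff {K : Finset M} {y x : M} :
    affineLineFinset R y x ⊆ K ↔ ∀ a : R, y + a • x ∈ K := by
  simp [affineLineFinset, image_subset_iff]

theorem card_affineLineFinset [IsCancelMulZero R] [Module.IsTorsionFree R M] (y : M) {x : M}
    (hx : x ≠ 0) : #(affineLineFinset R y x) = Fintype.card R :=
  card_image_of_injective _ ((add_right_injective y).comp (smul_left_injective R hx))

theorem card_inter_affineLineFinset_le_one {y x y' x' : M}
    (hind : LinearIndependent R ![x, x']) :
    #(affineLineFinset R y x ∩ affineLineFinset R y' x') ≤ 1 := by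
  rw [card_le_one]
  simp only [affineLineFinset, mem_inter, mem_image, mem_univ, true_and]
  rintro _ ⟨⟨a, rfl⟩, ⟨b, hb⟩⟩ _ ⟨⟨a', rfl⟩, ⟨b', hb'⟩⟩
  have hrel : (a - a') • x + (b' - b) • x' = 0 :=
    calc (a - a') • x + (b' - b) • x'
        = (y' + b' • x' - (y + a' • x)) - (y' + b • x' - (y + a • x)) := by
          simp only [sub_smul]; abel
      _ = 0 := by rw [hb, hb', sub_self, sub_self, sub_self]
  rw [sub_eq_zero.mp (LinearIndependent.pair_iff.mp hind _ _ hrel).1]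

end Line

section Plane

variable {F : Type*} [Field F]

/-- One nonzero representative of each point of the projective line over `F`. -/
def projDirection : Option F → Fin 2 → F
  | none => ![0, 1]
  | some t => ![1, t]

theorem projDirection_ne_zero (i : Option F) : projDirection i ≠ 0 := by
  cases i <;> simp [projDirection, funext_iff, Fin.forall_fin_two]

theorem linearIndependent_projDirection {i j : Option F} (hij : i ≠ j) :
    LinearIndependent F ![projDirection i, projDirection j] := by
  rw [LinearIndependent.pair_iff]
  intro s t h
  have h0 := congrFun h 0
  have h1 := congrFun h 1
  rcases i with _ | u <;> rcases j with _ | v <;>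
    simp only [projDirection, Pi.add_apply, Pi.smul_apply, smul_eq_mul, Pi.zero_apply,
      Matrix.cons_val_zero, Matrix.cons_val_one, Matrix.cons_val_fin_one, mul_zero, mul_one,
      zero_add, add_zero] at h0 h1
  · exact absurd rfl hij
  · subst h0
    exact ⟨by simpa using h1, rfl⟩
  · subst h0
    exact ⟨rfl, by simpa using h1⟩
  · have ht : t = -s := eq_neg_of_add_eq_zero_right h0
    subst ht
    have hs : s * (u - v) = 0 := by linear_combination h1
    have huv : u - v ≠ 0 := sub_ne_zero.mpr fun h => hij (congrArg some h)
    have hs0 : s = 0 := (mul_eq_zero.mp hs).resolve_right huv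
    exact ⟨hs0, by rw [hs0, neg_zero]⟩

theorem card_mul_succ_le_two_mul_card_of_kakeya [Fintype F] (K : Finset (Fin 2 → F))
    (hK : ∀ x : Fin 2 → F, ∃ y : Fin 2 → F, ∀ a : F, y + a • x ∈ K) :
    Fintype.card F * (Fintype.card F + 1) ≤ 2 * #K := by
  classical
  choose y hy using hK
  set q := Fintype.card F
  let L : Option F → Finset (Fin 2 → F) := fun i =>
    affineLineFinset F (y (projDirection i)) (projDirection i)
  have hcover : #(univ.biUnion L) ≤ #K :=
    card_le_card (biUnion_subset.mpr fun i _ => affineLineFinset_subset_iff.mpr (hy _))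
  have hsum : ∑ i, #(L i) = (q + 1) * q := by
    rw [sum_congr rfl fun i _ => card_affineLineFinset _ (projDirection_ne_zero i)]
    simp [q]
  have hbonferroni := sum_card_le_card_biUnion_add_choose_two univ L fun i _ j _ hij =>
    card_inter_affineLineFinset_le_one (linearIndependent_projDirection hij)
  have hchoose : (q + 1) * q = (q + 1).choose 2 * 2 := by
    simpa using Nat.add_one_mul_choose_eq q 1
  rw [hsum, card_univ, Fintype.card_option] at hbonferroni
  linarith

end Plane

theorem div_two_sub_inv_sq_le_of_mul_add_one_le {q k : ℝ} (hq : 1 ≤ q)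
    (h : q * (q + 1) ≤ 2 * k) : q ^ 2 / (2 - (q ^ 2)⁻¹) ≤ k := by
  have hq2 : 1 ≤ q ^ 2 := one_le_pow₀ hq
  have hpos : 0 < 2 * q ^ 2 - 1 := by linarith
  have hrw : q ^ 2 / (2 - (q ^ 2)⁻¹) = q ^ 4 / (2 * q ^ 2 - 1) := by
    field_simp
  rw [hrw, div_le_iff₀ hpos]
  nlinarith [mul_le_mul_of_nonneg_left h hpos.le]

theorem stmt_14_general {F : Type*} [Field F] [Fintype F] {q : ℕ}
    (hq : Fintype.card F = q)
    (K : Finset (Fin 2 → F))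
    (hK : ∀ x : Fin 2 → F, ∃ y : Fin 2 → F, ∀ a : F, y + a • x ∈ K) :
    (q : ℝ) ^ 2 / (2 - ((q : ℝ) ^ 2)⁻¹) ≤ (K.card : ℝ) ∧
      (q : ℝ) ^ 2 / 2 ≤ (K.card : ℝ) := by
  have hcount : (q : ℝ) * (q + 1) ≤ 2 * K.card := by
    exact_mod_cast hq ▸ card_mul_succ_le_two_mul_card_of_kakeya K hK
  have hq1 : (1 : ℝ) ≤ q := by exact_mod_cast hq ▸ Fintype.card_pos
  refine ⟨div_two_sub_inv_sq_le_of_mul_add_one_le hq1 hcount, ?_⟩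
  rw [div_le_iff₀ two_pos]
  nlinarith

/-- Every Kakeya set `K ⊆ F_q^2` satisfies `|K| ≥ q²/(2 − q^{-2})`; in particular
`|K| ≥ q²/2`. -/
theorem stmt_14 {F : Type*} [Field F] [Fintype F] [DecidableEq F] {q : ℕ}
    (hq : Fintype.card F = q)
    (K : Finset (Fin 2 → F))
    (hK : ∀ x : Fin 2 → F, ∃ y : Fin 2 → F, ∀ a : F, y + a • x ∈ K) :
    (q : ℝ) ^ 2 / (2 - ((q : ℝ) ^ 2)⁻¹) ≤ (K.card : ℝ) ∧
      (q : ℝ) ^ 2 / 2 ≤ (K.card : ℝ) :=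
  stmt_14_general hq K hK
end

section
/- Let d ≥ 2 and suppose there exists a Kakeya set K₀ ⊆ F_q^2 with |K₀| ≤ c·q² for some c ∈ (1/2, 1). Then K = K₀ × F_q^{d−2} is a Kakeya set in F_q^d, and every probability measure μ supported on K satisfies sup_{ξ ≠ 0} |μ̂(ξ)| ≥ sqrt((1−c)/c) · q^{-1}. -/
/-! Restricting to frequencies `(ξ₁, 0)` turns `μ̂` into `ν̂`, where `ν` is the marginal of `μ`
on `F_q^2`, a probability vector supported on `K₀`. By Parseval and Cauchy–Schwarz,
`∑_ξ |ν̂ ξ|² = q² ∑ ν(x)² ≥ q² / |K₀| ≥ 1 / c`, and `ν̂ 0 = 1`, so the fewer than `q²` nonzero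
frequencies carry mass at least `(1 - c) / c`, and one of them has `|ν̂ ξ|² ≥ (1 - c) / (c q²)`.
The Kakeya property of `K₀ × F_q^{d-2}` is inherited from `K₀` by taking lines with
second coordinate constant. -/

open Finset BigOperators Matrix

/-- The Fourier transform on the product space `F_q^2 ⊕ F_q^m`. -/
noncomputable def ft2 {F : Type*} [CommRing F] [Fintype F] {m : ℕ}
    (χ : AddChar F ℂ) (f : (Fin 2 → F) × (Fin m → F) → ℂ)
    (ξ : (Fin 2 → F) × (Fin m → F)) : ℂ :=
  ∑ p : (Fin 2 → F) × (Fin m → F), χ (-(ξ.1 ⬝ᵥ p.1 + ξ.2 ⬝ᵥ p.2)) * f p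

theorem AddChar.map_sum_eq_prod {A M ι : Type*} [AddCommMonoid A] [CommMonoid M]
    (ψ : AddChar A M) (s : Finset ι) (a : ι → A) :
    ψ (∑ i ∈ s, a i) = ∏ i ∈ s, ψ (a i) := by
  induction s using Finset.cons_induction <;> simp [*, AddChar.map_add_eq_mul]

theorem AddChar.sum_dotProduct_eq_ite {F ι : Type*} [Field F] [Fintype F] [DecidableEq F]
    [Fintype ι] [DecidableEq ι] {χ : AddChar F ℂ} (hχ : χ ≠ 1) (v : ι → F) :
    ∑ ξ : ι → F, χ (ξ ⬝ᵥ v) = if v = 0 then (Fintype.card F : ℂ) ^ Fintype.card ι else 0 := by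
  have hprim := AddChar.IsPrimitive.of_ne_one hχ
  calc ∑ ξ : ι → F, χ (ξ ⬝ᵥ v) = ∏ i, ∑ t, χ (t * v i) := by
        simp only [dotProduct, AddChar.map_sum_eq_prod, Fintype.prod_sum]
    _ = _ := by
        simp only [AddChar.sum_mulShift _ hprim, Nat.cast_ite, Nat.cast_zero,
          Fintype.prod_ite_zero, funext_iff, Pi.zero_apply, prod_const, card_univ]

theorem one_le_card_mul_sum_sq {α : Type*} [Fintype α] {S : Finset α} {ν : α → ℝ}
    (hν : ∑ x, ν x = 1) (hS : ∀ x ∉ S, ν x = 0) : 1 ≤ #S * ∑ x, ν x ^ 2 := by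
  have hsum : ∑ x ∈ S, ν x = ∑ x, ν x :=
    sum_subset (subset_univ S) fun x _ hx => hS x hx
  have hsq : ∑ x ∈ S, ν x ^ 2 = ∑ x, ν x ^ 2 :=
    sum_subset (subset_univ S) fun x _ hx => by simp [hS x hx]
  simpa [hsum, hsq, hν] using sq_sum_le_card_mul_sum_sq (s := S) (f := ν)

theorem exists_ne_div_card_le_of_le_sum_erase {α : Type*} [Fintype α] [DecidableEq α]
    [Nontrivial α] (a : α) {g : α → ℝ} {t : ℝ} (ht : 0 ≤ t)
    (h : t ≤ ∑ x ∈ univ.erase a, g x) : ∃ x ≠ a, t / Fintype.card α ≤ g x := by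
  have hconst : ∑ _x ∈ univ.erase a, t / Fintype.card α ≤ t :=
    calc ∑ _x ∈ univ.erase a, t / Fintype.card α ≤ ∑ _x : α, t / Fintype.card α :=
          sum_le_sum_of_subset_of_nonneg (erase_subset a univ) fun _ _ _ => by positivity
      _ = t := by simp [card_univ, mul_div_cancel₀ t (Nat.cast_ne_zero.2 Fintype.card_ne_zero)]
  obtain ⟨x, hx, hle⟩ := exists_le_of_sum_le univ_nontrivial.erase_nonempty (hconst.trans h)
  exact ⟨x, ne_of_mem_erase hx, hle⟩

section Fourier

variable {F ι : Type*} [Field F] [Fintype F] [Fintype ι] [DecidableEq ι]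

noncomputable def fourierDot (χ : AddChar F ℂ) (f : (ι → F) → ℂ) (ξ : ι → F) : ℂ :=
  ∑ x, χ (-(ξ ⬝ᵥ x)) * f x

theorem fourierDot_zero (χ : AddChar F ℂ) (f : (ι → F) → ℂ) :
    fourierDot χ f 0 = ∑ x, f x := by
  simp [fourierDot]

theorem fourierDot_mul_conj (χ : AddChar F ℂ) (f : (ι → F) → ℂ) (ξ : ι → F) :
    fourierDot χ f ξ * starRingEnd ℂ (fourierDot χ f ξ) =
      ∑ x, ∑ x', f x * starRingEnd ℂ (f x') * χ (ξ ⬝ᵥ (x' - x)) := by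
  simp only [fourierDot, map_sum, map_mul, sum_mul_sum, ← AddChar.map_neg_eq_conj, neg_neg]
  refine sum_congr rfl fun x _ => sum_congr rfl fun x' _ => ?_
  rw [dotProduct_sub, sub_eq_neg_add, AddChar.map_add_eq_mul]
  ring

theorem sum_fourierDot_mul_conj {χ : AddChar F ℂ} (hχ : χ ≠ 1) (f : (ι → F) → ℂ) :
    ∑ ξ, fourierDot χ f ξ * starRingEnd ℂ (fourierDot χ f ξ) =
      (Fintype.card F : ℂ) ^ Fintype.card ι * ∑ x, f x * starRingEnd ℂ (f x) := by
  classical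
  calc ∑ ξ, fourierDot χ f ξ * starRingEnd ℂ (fourierDot χ f ξ)
      = ∑ x, ∑ x', f x * starRingEnd ℂ (f x') * ∑ ξ : ι → F, χ (ξ ⬝ᵥ (x' - x)) := by
        simp only [fourierDot_mul_conj, mul_sum]
        rw [sum_comm]
        exact sum_congr rfl fun x _ => sum_comm
    _ = _ := by
        simp only [AddChar.sum_dotProduct_eq_ite hχ, sub_eq_zero, mul_ite, mul_zero,
          sum_ite_eq', mem_univ, if_true, mul_sum]
        exact sum_congr rfl fun x _ => mul_comm _ _

theorem sum_norm_fourierDot_sq {χ : AddChar F ℂ} (hχ : χ ≠ 1) (f : (ι → F) → ℂ) :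
    ∑ ξ, ‖fourierDot χ f ξ‖ ^ 2 = (Fintype.card F : ℝ) ^ Fintype.card ι * ∑ x, ‖f x‖ ^ 2 := by
  have := sum_fourierDot_mul_conj hχ f
  simp only [Complex.mul_conj, Complex.normSq_eq_norm_sq] at this
  exact_mod_cast this

theorem exists_ne_zero_le_norm_fourierDot_sq [Nonempty ι] {χ : AddChar F ℂ} (hχ : χ ≠ 1)
    {S : Finset (ι → F)} {c : ℝ} (hc₀ : 0 < c) (hc₁ : c ≤ 1)
    (hS : #S ≤ c * Fintype.card F ^ Fintype.card ι)
    {ν : (ι → F) → ℝ} (hν : ∑ x, ν x = 1) (hνS : ∀ x ∉ S, ν x = 0) :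
    ∃ ξ ≠ 0, (1 - c) / c / Fintype.card F ^ Fintype.card ι ≤
      ‖fourierDot χ (fun x => (ν x : ℂ)) ξ‖ ^ 2 := by
  classical
  set N : ℝ := Fintype.card F ^ Fintype.card ι
  have hparseval : ∑ ξ, ‖fourierDot χ (fun x => (ν x : ℂ)) ξ‖ ^ 2 = N * ∑ x, ν x ^ 2 := by
    simp only [sum_norm_fourierDot_sq hχ, Complex.norm_real, Real.norm_eq_abs, sq_abs, N]
  have hzero : ‖fourierDot χ (fun x => (ν x : ℂ)) 0‖ ^ 2 = 1 := by
    rw [fourierDot_zero, ← Complex.ofReal_sum, hν, Complex.ofReal_one, norm_one, one_pow]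
  have hmass : 1 / c ≤ N * ∑ x, ν x ^ 2 := by
    rw [div_le_iff₀ hc₀]
    calc 1 ≤ #S * ∑ x, ν x ^ 2 := one_le_card_mul_sum_sq hν hνS
      _ ≤ c * N * ∑ x, ν x ^ 2 := by gcongr
      _ = (N * ∑ x, ν x ^ 2) * c := by ring
  have htail : (1 - c) / c ≤ ∑ ξ ∈ univ.erase 0, ‖fourierDot χ (fun x => (ν x : ℂ)) ξ‖ ^ 2 := by
    rw [← add_sum_erase _ _ (mem_univ 0), hzero] at hparseval
    rw [sub_div, div_self hc₀.ne']
    linarith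
  simpa [N, Fintype.card_fun] using
    exists_ne_div_card_le_of_le_sum_erase 0 (div_nonneg (by linarith) hc₀.le) htail

theorem ft2_fst_zero {m : ℕ} (χ : AddChar F ℂ) (f : (Fin 2 → F) × (Fin m → F) → ℂ)
    (ξ : Fin 2 → F) :
    ft2 χ f (ξ, 0) = fourierDot χ (fun x => ∑ y, f (x, y)) ξ := by
  simp only [ft2, fourierDot, Fintype.sum_prod_type, zero_dotProduct, add_zero, mul_sum]

end Fourier

def IsKakeya (R : Type*) {V : Type*} [SMul R V] [Add V] (K : Set V) : Prop :=
  ∀ x : V, ∃ y : V, ∀ a : R, y + a • x ∈ K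

theorem IsKakeya.prod_univ {R V W : Type*} [Semiring R] [AddCommMonoid V] [Module R V]
    [AddCommMonoid W] [Module R W] {K : Set V} (hK : IsKakeya R K) :
    IsKakeya R (K ×ˢ (Set.univ : Set W)) := by
  rintro ⟨x, -⟩
  obtain ⟨y, hy⟩ := hK x
  exact ⟨(y, 0), fun a => ⟨by simpa using hy a, trivial⟩⟩

theorem stmt_17_general {F : Type*} [Field F] [Fintype F] {d q : ℕ}
    (hq : Fintype.card F = q) (χ : AddChar F ℂ) (hχ : χ ≠ 1)
    (c : ℝ) (hc : c ∈ Set.Ioo (1 / 2 : ℝ) 1)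
    (K₀ : Finset (Fin 2 → F))
    (hK₀ : ∀ x : Fin 2 → F, ∃ y : Fin 2 → F, ∀ a : F, y + a • x ∈ K₀)
    (hK₀c : (K₀.card : ℝ) ≤ c * (q : ℝ) ^ 2)
    (K : Finset ((Fin 2 → F) × (Fin (d - 2) → F)))
    (hKdef : K = K₀ ×ˢ (univ : Finset (Fin (d - 2) → F))) :
    (∀ x : (Fin 2 → F) × (Fin (d - 2) → F),
      ∃ y : (Fin 2 → F) × (Fin (d - 2) → F), ∀ a : F, y + a • x ∈ K) ∧
    ∀ μ : (Fin 2 → F) × (Fin (d - 2) → F) → ℝ,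
      (∀ p, 0 ≤ μ p) → (∑ p, μ p = 1) → (∀ p, μ p ≠ 0 → p ∈ K) →
      ∃ ξ : (Fin 2 → F) × (Fin (d - 2) → F), ξ ≠ 0 ∧
        Real.sqrt ((1 - c) / c) * (q : ℝ)⁻¹ ≤ ‖ft2 χ (fun p => (μ p : ℂ)) ξ‖ := by
  subst hKdef hq
  refine ⟨by simpa [IsKakeya] using IsKakeya.prod_univ (W := Fin (d - 2) → F) hK₀,
    fun μ _ hμ hμK => ?_⟩
  have hc₀ : 0 < c := by linarith [hc.1]
  obtain ⟨ξ, hξ, hle⟩ := exists_ne_zero_le_norm_fourierDot_sq (ι := Fin 2) hχ hc₀ hc.2.le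
    (by simpa using hK₀c) (ν := fun x => ∑ y, μ (x, y)) (by rw [← hμ, Fintype.sum_prod_type])
    fun x hx => sum_eq_zero fun y _ => by_contra fun h => hx (mem_product.1 (hμK _ h)).1
  refine ⟨(ξ, 0), fun h => hξ (congrArg Prod.fst h), ?_⟩
  rw [ft2_fst_zero, ← pow_le_pow_iff_left₀ (by positivity) (norm_nonneg _) two_ne_zero,
    mul_pow, Real.sq_sqrt (div_nonneg (by linarith [hc.2]) hc₀.le), inv_pow, ← div_eq_mul_inv]
  simpa using hle

/-- If `K₀ ⊆ F_q^2` is a Kakeya set with `|K₀| ≤ c q²`, `c ∈ (1/2,1)`, then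
`K = K₀ × F_q^{d−2}` is a Kakeya set in `F_q^d` and every probability measure on `K`
satisfies `sup_{ξ ≠ 0} |μ̂(ξ)| ≥ sqrt((1−c)/c) · q⁻¹`. -/
theorem stmt_17 {F : Type*} [Field F] [Fintype F] [DecidableEq F] {d q : ℕ}
    (hq : Fintype.card F = q) (χ : AddChar F ℂ) (hχ : χ ≠ 1) (hd : 2 ≤ d)
    (c : ℝ) (hc : c ∈ Set.Ioo (1 / 2 : ℝ) 1)
    (K₀ : Finset (Fin 2 → F))
    (hK₀ : ∀ x : Fin 2 → F, ∃ y : Fin 2 → F, ∀ a : F, y + a • x ∈ K₀)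
    (hK₀c : (K₀.card : ℝ) ≤ c * (q : ℝ) ^ 2)
    (K : Finset ((Fin 2 → F) × (Fin (d - 2) → F)))
    (hKdef : K = K₀ ×ˢ (univ : Finset (Fin (d - 2) → F))) :
    (∀ x : (Fin 2 → F) × (Fin (d - 2) → F),
      ∃ y : (Fin 2 → F) × (Fin (d - 2) → F), ∀ a : F, y + a • x ∈ K) ∧
    ∀ μ : (Fin 2 → F) × (Fin (d - 2) → F) → ℝ,
      (∀ p, 0 ≤ μ p) → (∑ p, μ p = 1) → (∀ p, μ p ≠ 0 → p ∈ K) →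
      ∃ ξ : (Fin 2 → F) × (Fin (d - 2) → F), ξ ≠ 0 ∧
        Real.sqrt ((1 - c) / c) * (q : ℝ)⁻¹ ≤ ‖ft2 χ (fun p => (μ p : ℂ)) ξ‖ :=
  stmt_17_general hq χ hχ c hc K₀ hK₀ hK₀c K hKdef
end
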